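/- For all positive reals $a_1,a_2,a_3,a_4$, $\Lambda(a_1,a_2,a_3,a_4) := \sqrt{\frac{(a_1 a_2 + a_3 a_4)(a_1 a_3 + a_2 a_4)(a_1 a_4 + a_2 a_3)}{a_1 a_2 a_3 a_4}} \ge \frac{1}{\sqrt{2}}(a_1 + a_2 + a_3 + a_4)$, with equality if and only if $a_1 = a_2 = a_3 = a_4$. -/
import Mathlib

open Real

set_option maxHeartbeats 1000000 in
theorem stmt_15 (a₁ a₂ a₃ a₄ : ℝ) (h₁ : 0 < a₁) (h₂ : 0 < a₂) (h₃ : 0 < a₃) (h₄ : 0 < a₄) :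
    (1 / Real.sqrt 2) * (a₁ + a₂ + a₃ + a₄) ≤
      Real.sqrt ((a₁ * a₂ + a₃ * a₄) * (a₁ * a₃ + a₂ * a₄) * (a₁ * a₄ + a₂ * a₃) /
        (a₁ * a₂ * a₃ * a₄)) ∧
    (Real.sqrt ((a₁ * a₂ + a₃ * a₄) * (a₁ * a₃ + a₂ * a₄) * (a₁ * a₄ + a₂ * a₃) /
        (a₁ * a₂ * a₃ * a₄)) = (1 / Real.sqrt 2) * (a₁ + a₂ + a₃ + a₄)
      ↔ (a₁ = a₂ ∧ a₂ = a₃ ∧ a₃ = a₄)) := by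
  have hQ : (0:ℝ) < a₁ * a₂ * a₃ * a₄ := by positivity
  have hs : (0:ℝ) < a₁ + a₂ + a₃ + a₄ := by positivity
  have h2pos : (0:ℝ) < Real.sqrt 2 := Real.sqrt_pos.mpr (by norm_num)
  have hsq2 : Real.sqrt 2 ^ 2 = 2 := Real.sq_sqrt (by norm_num)
  -- key polynomial inequality
  have key : (a₁ * a₂ * a₃ * a₄) * (a₁ + a₂ + a₃ + a₄) ^ 2 ≤
      2 * ((a₁ * a₂ + a₃ * a₄) * (a₁ * a₃ + a₂ * a₄) * (a₁ * a₄ + a₂ * a₃)) := by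
    nlinarith [sq_nonneg (a₃ * a₄ * (a₁ - a₂)), sq_nonneg (a₁ * a₂ * (a₃ - a₄)),
      sq_nonneg (a₂ * a₄ * (a₁ - a₃)), sq_nonneg (a₁ * a₃ * (a₂ - a₄)),
      sq_nonneg (a₂ * a₃ * (a₁ - a₄)), sq_nonneg (a₁ * a₄ * (a₂ - a₃)),
      mul_nonneg hQ.le (sq_nonneg (a₁ - a₂)), mul_nonneg hQ.le (sq_nonneg (a₁ - a₃)),
      mul_nonneg hQ.le (sq_nonneg (a₁ - a₄)), mul_nonneg hQ.le (sq_nonneg (a₂ - a₃)),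
      mul_nonneg hQ.le (sq_nonneg (a₂ - a₄)), mul_nonneg hQ.le (sq_nonneg (a₃ - a₄))]
  have hdiv : (a₁ + a₂ + a₃ + a₄) ^ 2 / 2 ≤
      (a₁ * a₂ + a₃ * a₄) * (a₁ * a₃ + a₂ * a₄) * (a₁ * a₄ + a₂ * a₃) /
        (a₁ * a₂ * a₃ * a₄) := by
    rw [div_le_div_iff₀ (by norm_num) hQ]
    nlinarith [key]
  have hrw : (1 / Real.sqrt 2) * (a₁ + a₂ + a₃ + a₄)
      = Real.sqrt ((a₁ + a₂ + a₃ + a₄) ^ 2 / 2) := by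
    rw [Real.sqrt_div (sq_nonneg _), Real.sqrt_sq hs.le]
    ring
  have hineq : (1 / Real.sqrt 2) * (a₁ + a₂ + a₃ + a₄) ≤
      Real.sqrt ((a₁ * a₂ + a₃ * a₄) * (a₁ * a₃ + a₂ * a₄) * (a₁ * a₄ + a₂ * a₃) /
        (a₁ * a₂ * a₃ * a₄)) := by
    rw [hrw]
    exact Real.sqrt_le_sqrt hdiv
  refine ⟨hineq, ?_, ?_⟩
  · -- equality implies all equal
    intro heq
    have hPQnn : (0:ℝ) ≤ (a₁ * a₂ + a₃ * a₄) * (a₁ * a₃ + a₂ * a₄) * (a₁ * a₄ + a₂ * a₃) /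
        (a₁ * a₂ * a₃ * a₄) := by positivity
    have h1 : (a₁ * a₂ + a₃ * a₄) * (a₁ * a₃ + a₂ * a₄) * (a₁ * a₄ + a₂ * a₃) /
        (a₁ * a₂ * a₃ * a₄) = (a₁ + a₂ + a₃ + a₄) ^ 2 / 2 := by
      have h := Real.sq_sqrt hPQnn
      rw [heq, mul_pow, div_pow, one_pow, hsq2] at h
      linarith
    have hE : 2 * ((a₁ * a₂ + a₃ * a₄) * (a₁ * a₃ + a₂ * a₄) * (a₁ * a₄ + a₂ * a₃))
        = (a₁ * a₂ * a₃ * a₄) * (a₁ + a₂ + a₃ + a₄) ^ 2 := by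
      field_simp at h1
      linarith
    have h₁₂ : a₁ = a₂ := by
      have hx2 : (a₁ * a₂ * a₃ * a₄) * (a₁ - a₂) ^ 2 ≤ (a₁ * a₂ * a₃ * a₄) * 0 := by
        rw [mul_zero]
        linarith [sq_nonneg (a₃ * a₄ * (a₁ - a₂)), sq_nonneg (a₁ * a₂ * (a₃ - a₄)), sq_nonneg (a₂ * a₄ * (a₁ - a₃)), sq_nonneg (a₁ * a₃ * (a₂ - a₄)), sq_nonneg (a₂ * a₃ * (a₁ - a₄)), sq_nonneg (a₁ * a₄ * (a₂ - a₃)), mul_nonneg hQ.le (sq_nonneg (a₁ - a₃)), mul_nonneg hQ.le (sq_nonneg (a₁ - a₄)), mul_nonneg hQ.le (sq_nonneg (a₂ - a₃)), mul_nonneg hQ.le (sq_nonneg (a₂ - a₄)), mul_nonneg hQ.le (sq_nonneg (a₃ - a₄)), hE]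
      have hx : (a₁ - a₂) ^ 2 ≤ 0 := le_of_mul_le_mul_left (by simpa using hx2) hQ
      have h0 : (a₁ - a₂) ^ 2 = 0 := le_antisymm hx (sq_nonneg _)
      have := pow_eq_zero_iff (two_ne_zero) |>.mp h0
      linarith
    have h₂₃ : a₂ = a₃ := by
      have hx2 : (a₁ * a₂ * a₃ * a₄) * (a₂ - a₃) ^ 2 ≤ (a₁ * a₂ * a₃ * a₄) * 0 := by
        rw [mul_zero]
        linarith [sq_nonneg (a₃ * a₄ * (a₁ - a₂)), sq_nonneg (a₁ * a₂ * (a₃ - a₄)), sq_nonneg (a₂ * a₄ * (a₁ - a₃)), sq_nonneg (a₁ * a₃ * (a₂ - a₄)), sq_nonneg (a₂ * a₃ * (a₁ - a₄)), sq_nonneg (a₁ * a₄ * (a₂ - a₃)), mul_nonneg hQ.le (sq_nonneg (a₁ - a₂)), mul_nonneg hQ.le (sq_nonneg (a₁ - a₃)), mul_nonneg hQ.le (sq_nonneg (a₁ - a₄)), mul_nonneg hQ.le (sq_nonneg (a₂ - a₄)), mul_nonneg hQ.le (sq_nonneg (a₃ - a₄)), hE]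
      have hx : (a₂ - a₃) ^ 2 ≤ 0 := le_of_mul_le_mul_left (by simpa using hx2) hQ
      have h0 : (a₂ - a₃) ^ 2 = 0 := le_antisymm hx (sq_nonneg _)
      have := pow_eq_zero_iff (two_ne_zero) |>.mp h0
      linarith
    have h₃₄ : a₃ = a₄ := by
      have hx2 : (a₁ * a₂ * a₃ * a₄) * (a₃ - a₄) ^ 2 ≤ (a₁ * a₂ * a₃ * a₄) * 0 := by
        rw [mul_zero]
        linarith [sq_nonneg (a₃ * a₄ * (a₁ - a₂)), sq_nonneg (a₁ * a₂ * (a₃ - a₄)), sq_nonneg (a₂ * a₄ * (a₁ - a₃)), sq_nonneg (a₁ * a₃ * (a₂ - a₄)), sq_nonneg (a₂ * a₃ * (a₁ - a₄)), sq_nonneg (a₁ * a₄ * (a₂ - a₃)), mul_nonneg hQ.le (sq_nonneg (a₁ - a₂)), mul_nonneg hQ.le (sq_nonneg (a₁ - a₃)), mul_nonneg hQ.le (sq_nonneg (a₁ - a₄)), mul_nonneg hQ.le (sq_nonneg (a₂ - a₃)), mul_nonneg hQ.le (sq_nonneg (a₂ - a₄)), hE]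
      have hx : (a₃ - a₄) ^ 2 ≤ 0 := le_of_mul_le_mul_left (by simpa using hx2) hQ
      have h0 : (a₃ - a₄) ^ 2 = 0 := le_antisymm hx (sq_nonneg _)
      have := pow_eq_zero_iff (two_ne_zero) |>.mp h0
      linarith
    exact ⟨h₁₂, h₂₃, h₃₄⟩
  · rintro ⟨e12, e23, e34⟩
    subst e12 e23 e34
    have hv : (a₁ * a₁ + a₁ * a₁) * (a₁ * a₁ + a₁ * a₁) * (a₁ * a₁ + a₁ * a₁) /
        (a₁ * a₁ * a₁ * a₁) = 8 * a₁ ^ 2 := by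
      field_simp
      ring
    rw [hv, show (8:ℝ) * a₁ ^ 2 = (2 * Real.sqrt 2 * a₁) ^ 2 by
      rw [mul_pow, mul_pow, hsq2]; ring,
      Real.sqrt_sq (by positivity)]
    field_simp
    nlinarith [hsq2]
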